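/- Let V be a graded Lie algebra of degree n over a commutative ring R with 2 invertible, and let d₁, d₂ ∈ V be homogeneous elements of the same degree with n+|d₁| odd, satisfying [d₁,d₁] = [d₂,d₂] = [d₁,d₂] = 0. Then [d₁+d₂, d₁+d₂] = 0, for all a,b ∈ V one has [a,b]_{d₁} + [a,b]_{d₂} = [a,b]_{d₁+d₂}, and consequently the sum bracket (a,b) ↦ [a,b]_{d₁} + [a,b]_{d₂} satisfies the graded Jacobi identity of a Loday bracket of degree n+|d₁|+n; in other words, the derived brackets [·,·]_{d₁} and [·,·]_{d₂} are compatible. -/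

import Mathlib

/-- `(-1)^m` as an integer, for `m : ℤ` (depends only on the parity of `m`). -/
def gsign (m : ℤ) : ℤ := (((-1 : ℤˣ) ^ m : ℤˣ) : ℤ)

/-- A graded Lie algebra of degree `n` over a commutative ring `R`: a `ℤ`-graded
`R`-module with an `R`-bilinear bracket sending `V_i × V_j` into `V_{i+j+n}`,
graded skew-symmetric and satisfying the graded Jacobi identity. -/
structure GradedLieAlgebraOfDegree (R : Type*) [CommRing R] (V : Type*) [AddCommGroup V] [Module R V]
    (n : ℤ) where
  grade : ℤ → Submodule R V
  bracket : V →ₗ[R] V →ₗ[R] V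
  bracket_mem : ∀ i j : ℤ, ∀ a ∈ grade i, ∀ b ∈ grade j, bracket a b ∈ grade (i + j + n)
  skew : ∀ i j : ℤ, ∀ a ∈ grade i, ∀ b ∈ grade j,
    bracket a b = - (gsign ((n + i) * (n + j)) • bracket b a)
  jacobi : ∀ i j l : ℤ, ∀ a ∈ grade i, ∀ b ∈ grade j, ∀ c ∈ grade l,
    bracket a (bracket b c)
      = bracket (bracket a b) c + gsign ((n + i) * (n + j)) • bracket b (bracket a c)

/-- `D` is a differential of odd degree `k` on the graded Lie algebra `L`:
homogeneous of odd degree `k`, of square zero, and a graded derivation of the bracket. -/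
structure GradedLieAlgebraOfDegree.IsDifferential {R : Type*} [CommRing R] {V : Type*} [AddCommGroup V]
    [Module R V] {n : ℤ} (L : GradedLieAlgebraOfDegree R V n) (D : V →ₗ[R] V) (k : ℤ) : Prop where
  odd : Odd k
  map_mem : ∀ i : ℤ, ∀ a ∈ L.grade i, D a ∈ L.grade (i + k)
  sq_zero : ∀ a : V, D (D a) = 0
  leibniz : ∀ i j : ℤ, ∀ a ∈ L.grade i, ∀ b ∈ L.grade j,
    D (L.bracket a b) = L.bracket (D a) b + gsign (k * (n + i)) • L.bracket a (D b)

/-- The derived bracket `[a,b]_{(D)} = (-1)^{n+|a|+1} • [D a, b]`, for `a` homogeneous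
of degree `i`. -/
def GradedLieAlgebraOfDegree.der {R : Type*} [CommRing R] {V : Type*} [AddCommGroup V] [Module R V]
    {n : ℤ} (L : GradedLieAlgebraOfDegree R V n) (D : V →ₗ[R] V) (i : ℤ) (a b : V) : V :=
  gsign (n + i + 1) • L.bracket (D a) b

/-- The derived bracket `[a,b]_d = [[a,d],b]` by an element `d`. -/
def GradedLieAlgebraOfDegree.derEl {R : Type*} [CommRing R] {V : Type*} [AddCommGroup V] [Module R V]
    {n : ℤ} (L : GradedLieAlgebraOfDegree R V n) (d : V) (a b : V) : V :=
  L.bracket (L.bracket a d) b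


lemma gsign_odd {m : ℤ} (h : Odd m) : gsign m = -1 := by
  unfold gsign
  obtain ⟨k, rfl⟩ := h
  rw [zpow_add, zpow_mul, show ((-1:ℤˣ)^(2:ℤ)) = 1 by decide, one_zpow]
  simp

lemma gsign_add (x y : ℤ) : gsign (x + y) = gsign x * gsign y := by
  unfold gsign; rw [zpow_add]; simp

lemma two_smul_eq_zero {R : Type*} [CommRing R] [Invertible (2 : R)] {V : Type*}
    [AddCommGroup V] [Module R V] {x : V} (h : (2 : ℤ) • x = 0) : x = 0 := by
  have h2 : (2 : R) • x = 0 := by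
    rw [← Int.cast_smul_eq_zsmul R 2 x] at h; exact_mod_cast h
  calc x = ⅟(2:R) • ((2:R) • x) := by rw [smul_smul, invOf_mul_self, one_smul]
  _ = 0 := by rw [h2, smul_zero]

/-- `[[a,d],d] = 0` for `d` homogeneous with `n + |d|` odd and `[d,d] = 0`. -/
lemma bracket_bracket_d {R : Type*} [CommRing R] [Invertible (2 : R)] {V : Type*}
    [AddCommGroup V] [Module R V] {n : ℤ} (L : GradedLieAlgebraOfDegree R V n) {d : V} {dd : ℤ}
    (hd : d ∈ L.grade dd) (hodd : Odd (n + dd)) (hdd : L.bracket d d = 0)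
    {i : ℤ} {a : V} (ha : a ∈ L.grade i) :
    L.bracket (L.bracket a d) d = 0 := by
  have had : L.bracket a d ∈ L.grade (i + dd + n) := L.bracket_mem i dd a ha d hd
  have hj := L.jacobi i dd dd a ha d hd d hd
  rw [hdd, (L.bracket a).map_zero] at hj
  have hsk := L.skew dd (i + dd + n) d hd _ had
  rw [hsk, smul_neg, smul_smul, ← gsign_add] at hj
  have hoddE : Odd ((n + i) * (n + dd) + (n + dd) * (n + (i + dd + n))) := by
    have : (n + i) * (n + dd) + (n + dd) * (n + (i + dd + n))
        = (n + dd) * ((n + dd) + 2 * (n + i)) := by ring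
    rw [this]
    obtain ⟨k, hk⟩ := hodd
    exact Odd.mul ⟨k, hk⟩ ⟨k + (n + i), by omega⟩
  rw [gsign_odd hoddE] at hj
  have h2 : (2 : ℤ) • L.bracket (L.bracket a d) d = 0 := by
    rw [neg_smul, one_smul, neg_neg] at hj
    rw [two_smul]
    exact hj.symm
  exact two_smul_eq_zero (R := R) h2

/-- Loday/Jacobi identity for the derived bracket `[a,b]_d = [[a,d],b]`. -/
lemma derEl_jacobi {R : Type*} [CommRing R] [Invertible (2 : R)] {V : Type*}
    [AddCommGroup V] [Module R V] {n : ℤ} (L : GradedLieAlgebraOfDegree R V n) {d : V} {dd : ℤ}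
    (hd : d ∈ L.grade dd) (hodd : Odd (n + dd)) (hdd : L.bracket d d = 0)
    (i j l : ℤ) (a : V) (ha : a ∈ L.grade i) (b : V) (hb : b ∈ L.grade j)
    (c : V) (hc : c ∈ L.grade l) :
    L.derEl d a (L.derEl d b c)
      = L.derEl d (L.derEl d a b) c
        + gsign ((n + (dd + n) + i) * (n + (dd + n) + j)) • L.derEl d b (L.derEl d a c) := by
  have had : L.bracket a d ∈ L.grade (i + dd + n) := L.bracket_mem i dd a ha d hd
  have hbd : L.bracket b d ∈ L.grade (j + dd + n) := L.bracket_mem j dd b hb d hd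
  have hαd : L.bracket (L.bracket a d) d = 0 := bracket_bracket_d L hd hodd hdd ha
  -- [α, β] = [[α,b],d]
  have hstep : L.bracket (L.bracket a d) (L.bracket b d)
      = L.bracket (L.bracket (L.bracket a d) b) d := by
    have := L.jacobi (i + dd + n) j dd _ had b hb d hd
    rw [hαd, (L.bracket b).map_zero, smul_zero, add_zero] at this
    exact this
  have hj := L.jacobi (i + dd + n) (j + dd + n) l _ had _ hbd c hc
  rw [hstep] at hj
  unfold GradedLieAlgebraOfDegree.derEl
  convert hj using 3
  ring_nf

/-- for commuting differentials given by elements `d₁, d₂` of the same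
degree with `n + |d₁|` odd and `[d₁,d₁] = [d₂,d₂] = [d₁,d₂] = 0`, one has
`[d₁+d₂, d₁+d₂] = 0`, the sum of the two derived brackets is the derived bracket by
`d₁ + d₂`, and the sum bracket satisfies the graded Jacobi identity of a Loday
bracket of degree `n + |d₁| + n`: the derived brackets are compatible. -/
theorem compatibility_of_derived_brackets {R : Type*} [CommRing R]
    [Invertible (2 : R)] {V : Type*} [AddCommGroup V] [Module R V] {n : ℤ}
    (L : GradedLieAlgebraOfDegree R V n) (d₁ d₂ : V) (dd : ℤ)
    (hd₁ : d₁ ∈ L.grade dd) (hd₂ : d₂ ∈ L.grade dd) (hodd : Odd (n + dd))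
    (h11 : L.bracket d₁ d₁ = 0) (h22 : L.bracket d₂ d₂ = 0)
    (h12 : L.bracket d₁ d₂ = 0) :
    L.bracket (d₁ + d₂) (d₁ + d₂) = 0 ∧
    (∀ a b : V, L.derEl d₁ a b + L.derEl d₂ a b = L.derEl (d₁ + d₂) a b) ∧
    (∀ i j l : ℤ, ∀ a ∈ L.grade i, ∀ b ∈ L.grade j, ∀ c ∈ L.grade l,
        (L.derEl d₁ a (L.derEl d₁ b c + L.derEl d₂ b c)
            + L.derEl d₂ a (L.derEl d₁ b c + L.derEl d₂ b c))
          = (L.derEl d₁ (L.derEl d₁ a b + L.derEl d₂ a b) c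
              + L.derEl d₂ (L.derEl d₁ a b + L.derEl d₂ a b) c)
            + gsign ((n + (dd + n) + i) * (n + (dd + n) + j)) •
              (L.derEl d₁ b (L.derEl d₁ a c + L.derEl d₂ a c)
                + L.derEl d₂ b (L.derEl d₁ a c + L.derEl d₂ a c))) := by
  have hd : d₁ + d₂ ∈ L.grade dd := Submodule.add_mem _ hd₁ hd₂
  have h21 : L.bracket d₂ d₁ = 0 := by
    rw [L.skew dd dd d₂ hd₂ d₁ hd₁, h12, smul_zero, neg_zero]
  have h0 : L.bracket (d₁ + d₂) (d₁ + d₂) = 0 := by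
    simp [map_add, h11, h22, h12, h21]
  have hsum : ∀ a b : V, L.derEl d₁ a b + L.derEl d₂ a b = L.derEl (d₁ + d₂) a b := by
    intro a b
    unfold GradedLieAlgebraOfDegree.derEl
    rw [(L.bracket a).map_add, map_add, LinearMap.add_apply]
  refine ⟨h0, hsum, ?_⟩
  intro i j l a ha b hb c hc
  simp only [hsum]
  exact derEl_jacobi L hd hodd h0 i j l a ha b hb c hc
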